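/- arXiv:1408.2277 — 3 statements merged into one kernel-verified Lean document; each statement's English description precedes it below -/
import Mathlib

section
/- For all natural numbers n, i_{2n} = i_n · t_n and i_{2n+1} = i_n, where (t_n) is the Thue–Morse sequence t_n = (-1)^{s_2(n)}. -/
/-- `inv2 n` is the number of inversions in the binary representation of `n`,
i.e. the number of pairs of bit positions `a > b` such that bit `a` of `n` is `1`
and bit `b` of `n` is `0`. -/
def inv2 (n : ℕ) : ℕ :=
  ((Finset.range (n + 1) ×ˢ Finset.range (n + 1)).filter
    (fun p => p.2 < p.1 ∧ n.testBit p.1 = true ∧ n.testBit p.2 = false)).card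

/-- `iSeq n = (-1)^(inv2 n)`. -/
def iSeq (n : ℕ) : ℤ := (-1) ^ inv2 n

/-- The Thue–Morse sequence `t n = (-1)^(s₂ n)`, where `s₂ n` is the sum of the
binary digits of `n`. -/
def tm (n : ℕ) : ℤ := (-1) ^ (Nat.digits 2 n).sum

/-!
The binary digits of `2n + r` (`r < 2`) are those of `n` moved up one place, with `r` in
position `0`. An inversion of `2n + r` is therefore either an inversion of `n` moved up, or
a pair whose `0` sits in position `0`; the latter exist only for `r = 0`, one for each `1`
of `n`. Hence `inv₂(2n+1) = inv₂ n` and `inv₂(2n) = inv₂ n + s₂ n`.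
-/

namespace Nat

def bitInversions (n : ℕ) : Set (ℕ × ℕ) :=
  {p | p.2 < p.1 ∧ n.testBit p.1 = true ∧ n.testBit p.2 = false}

lemma lt_of_testBit_eq_true {n i : ℕ} (h : n.testBit i = true) : i < n :=
  i.lt_two_pow_self.trans_le (ge_two_pow_of_testBit h)

lemma bitInversions_subset (n : ℕ) : bitInversions n ⊆ Set.Iio n ×ˢ Set.Iio n :=
  fun _ ⟨hlt, h1, _⟩ => ⟨lt_of_testBit_eq_true h1, hlt.trans (lt_of_testBit_eq_true h1)⟩

lemma bitInversions_finite (n : ℕ) : (bitInversions n).Finite :=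
  ((Set.finite_Iio n).prod (Set.finite_Iio n)).subset (bitInversions_subset n)

lemma bitInversions_two_mul_add_one (n : ℕ) :
    bitInversions (2 * n + 1) = Prod.map succ succ '' bitInversions n := by
  ext ⟨_ | a, _ | b⟩ <;> simp [bitInversions, testBit_add_one, mul_add_div]

lemma bitInversions_two_mul (n : ℕ) :
    bitInversions (2 * n) =
      Prod.map succ succ '' bitInversions n ∪ (fun a => (a + 1, 0)) '' ↑n.bitIndices.toFinset := by
  ext ⟨_ | a, _ | b⟩ <;> simp [bitInversions, testBit_add_one]

lemma ncard_bitInversions_two_mul_add_one (n : ℕ) :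
    (bitInversions (2 * n + 1)).ncard = (bitInversions n).ncard := by
  rw [bitInversions_two_mul_add_one,
    Set.ncard_image_of_injective _ (Prod.map_injective.2 ⟨succ_injective, succ_injective⟩)]

lemma ncard_bitInversions_two_mul (n : ℕ) :
    (bitInversions (2 * n)).ncard = (bitInversions n).ncard + n.bitIndices.length := by
  have hdisj : Disjoint (Prod.map succ succ '' bitInversions n)
      ((fun a => (a + 1, 0)) '' ↑n.bitIndices.toFinset) := by
    rw [Set.disjoint_left]
    rintro _ ⟨⟨a, b⟩, -, rfl⟩ ⟨c, -, h⟩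
    simp at h
  rw [bitInversions_two_mul,
    Set.ncard_union_eq hdisj ((bitInversions_finite n).image _) ((Finset.finite_toSet _).image _),
    Set.ncard_image_of_injective _ (Prod.map_injective.2 ⟨succ_injective, succ_injective⟩),
    Set.ncard_image_of_injective _ (fun a b h => by simpa using h), Set.ncard_coe_finset,
    List.toFinset_card_of_nodup bitIndices_nodup]

lemma sum_digits_two_eq_length_bitIndices (n : ℕ) :
    (digits 2 n).sum = n.bitIndices.length := by
  induction n using Nat.evenOddRec with
  | h0 => simp
  | h_even n ih =>
    rcases n.eq_zero_or_pos with rfl | hn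
    · simp
    · rw [digits_def' one_lt_two (by positivity)]
      simp [ih]
  | h_odd n ih =>
    have hmod : (2 * n + 1) % 2 = 1 := by omega
    have hdiv : (2 * n + 1) / 2 = n := by omega
    rw [digits_def' one_lt_two (succ_pos _), hmod, hdiv, List.sum_cons, ih,
      bitIndices_two_mul_add_one, List.length_cons, List.length_map, add_comm]

end Nat

open Nat

lemma inv2_eq_ncard_bitInversions (n : ℕ) : inv2 n = (bitInversions n).ncard := by
  rw [inv2, ← Set.ncard_coe_finset]
  congr 1
  ext p
  simp only [Finset.coe_filter, Finset.mem_product, Finset.mem_range, Set.mem_ofPred_eq]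
  refine ⟨fun h => h.2, fun h => ⟨?_, h⟩⟩
  obtain ⟨h1, h2⟩ := bitInversions_subset n h
  exact ⟨lt_succ_of_lt h1, lt_succ_of_lt h2⟩

lemma inv2_two_mul_add_one (n : ℕ) : inv2 (2 * n + 1) = inv2 n := by
  rw [inv2_eq_ncard_bitInversions, inv2_eq_ncard_bitInversions,
    ncard_bitInversions_two_mul_add_one]

lemma inv2_two_mul (n : ℕ) : inv2 (2 * n) = inv2 n + (digits 2 n).sum := by
  rw [inv2_eq_ncard_bitInversions, inv2_eq_ncard_bitInversions, ncard_bitInversions_two_mul,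
    sum_digits_two_eq_length_bitIndices]

theorem iSeq_two_mul_recurrences (n : ℕ) :
    iSeq (2 * n) = iSeq n * tm n ∧ iSeq (2 * n + 1) = iSeq n := by
  constructor
  · rw [iSeq, iSeq, tm, inv2_two_mul, pow_add]
  · rw [iSeq, iSeq, inv2_two_mul_add_one]
end

section
/- For every positive integer n, (S(n) - 2)/2 ≤ S(⌊n/4⌋) ≤ (S(n) + 2)/2. -/
/-- The summatory function `S N = ∑_{0 ≤ n ≤ N} iSeq n`. -/
def S (N : ℕ) : ℤ := ∑ n ∈ Finset.range (N + 1), iSeq n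

open Finset

/- Appending a bit shifts positions, so inversions and ones are counted below an arbitrary
bound `M`; every set bit of `n` lies below `n`, so any `M ≥ n` gives the full count. -/
def inv2Below (n M : ℕ) : ℕ :=
  ((range M ×ˢ range M).filter
    (fun p => p.2 < p.1 ∧ n.testBit p.1 = true ∧ n.testBit p.2 = false)).card

def onesBelow (n M : ℕ) : ℕ := ((range M).filter (fun i => n.testBit i = true)).card

def popcount (n : ℕ) : ℕ := onesBelow n n

def thueMorse (n : ℕ) : ℤ := (-1) ^ popcount n

lemma Nat.lt_of_testBit_eq_true_s5 {n i : ℕ} (h : n.testBit i = true) : i < n :=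
  Nat.lt_two_pow_self.trans_le (Nat.ge_two_pow_of_testBit h)

lemma inv2Below_eq_inv2 {n M : ℕ} (h : n ≤ M) : inv2Below n M = inv2 n := by
  unfold inv2Below inv2
  congr 1
  ext ⟨a, b⟩
  simp only [mem_filter, mem_product, mem_range]
  constructor <;> rintro ⟨-, hba, ha, hb⟩ <;> have := Nat.lt_of_testBit_eq_true_s5 ha <;>
    exact ⟨⟨by omega, by omega⟩, hba, ha, hb⟩

lemma onesBelow_eq_popcount {n M : ℕ} (h : n ≤ M) : onesBelow n M = popcount n := by
  unfold popcount onesBelow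
  congr 1
  ext a
  simp only [mem_filter, mem_range]
  constructor <;> rintro ⟨-, ha⟩ <;> have := Nat.lt_of_testBit_eq_true_s5 ha <;>
    exact ⟨by omega, ha⟩

lemma inv2Below_bit (e : Bool) (k M : ℕ) :
    inv2Below (Nat.bit e k) (M + 1) = inv2Below k M + bif e then 0 else onesBelow k M := by
  simp only [inv2Below, onesBelow, card_filter, sum_product, sum_range_succ',
    Nat.testBit_bit_succ, Nat.testBit_bit_zero]
  cases e <;> simp [sum_add_distrib]

lemma onesBelow_bit (e : Bool) (k M : ℕ) :
    onesBelow (Nat.bit e k) (M + 1) = onesBelow k M + e.toNat := by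
  simp only [onesBelow, card_filter, sum_range_succ', Nat.testBit_bit_succ, Nat.testBit_bit_zero]
  cases e <;> simp

lemma Nat.le_bit (e : Bool) (k : ℕ) : k ≤ Nat.bit e k := by
  rw [Nat.bit_val]; omega

lemma inv2_bit (e : Bool) (k : ℕ) :
    inv2 (Nat.bit e k) = inv2 k + bif e then 0 else popcount k := by
  rw [← inv2Below_eq_inv2 (Nat.le_succ _), inv2Below_bit, inv2Below_eq_inv2 (Nat.le_bit e k),
    onesBelow_eq_popcount (Nat.le_bit e k)]

lemma popcount_bit (e : Bool) (k : ℕ) : popcount (Nat.bit e k) = popcount k + e.toNat := by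
  rw [← onesBelow_eq_popcount (Nat.le_succ _), onesBelow_bit,
    onesBelow_eq_popcount (Nat.le_bit e k)]

lemma iSeq_two_mul_add_one (k : ℕ) : iSeq (2 * k + 1) = iSeq k := by
  simpa [iSeq] using congrArg ((-1 : ℤ) ^ ·) (inv2_bit true k)

lemma iSeq_two_mul (k : ℕ) : iSeq (2 * k) = thueMorse k * iSeq k := by
  simpa [iSeq, thueMorse, pow_add, mul_comm] using congrArg ((-1 : ℤ) ^ ·) (inv2_bit false k)

lemma thueMorse_two_mul (k : ℕ) : thueMorse (2 * k) = thueMorse k := by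
  simpa [thueMorse] using congrArg ((-1 : ℤ) ^ ·) (popcount_bit false k)

lemma thueMorse_two_mul_add_one (k : ℕ) : thueMorse (2 * k + 1) = -thueMorse k := by
  simpa [thueMorse, pow_succ] using congrArg ((-1 : ℤ) ^ ·) (popcount_bit true k)

lemma thueMorse_mul_self (k : ℕ) : thueMorse k * thueMorse k = 1 := by
  rw [thueMorse, ← pow_add, ← two_mul, pow_mul, neg_one_sq, one_pow]

lemma iSeq_four_mul (k : ℕ) : iSeq (4 * k) = iSeq k := by
  rw [show 4 * k = 2 * (2 * k) by ring, iSeq_two_mul, thueMorse_two_mul, iSeq_two_mul,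
    ← mul_assoc, thueMorse_mul_self, one_mul]

lemma iSeq_four_mul_add_one (k : ℕ) : iSeq (4 * k + 1) = thueMorse k * iSeq k := by
  rw [show 4 * k + 1 = 2 * (2 * k) + 1 by ring, iSeq_two_mul_add_one, iSeq_two_mul]

lemma iSeq_four_mul_add_two (k : ℕ) : iSeq (4 * k + 2) = -(thueMorse k * iSeq k) := by
  rw [show 4 * k + 2 = 2 * (2 * k + 1) by ring, iSeq_two_mul, thueMorse_two_mul_add_one,
    iSeq_two_mul_add_one, neg_mul]

lemma iSeq_four_mul_add_three (k : ℕ) : iSeq (4 * k + 3) = iSeq k := by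
  rw [show 4 * k + 3 = 2 * (2 * k + 1) + 1 by ring, iSeq_two_mul_add_one, iSeq_two_mul_add_one]

lemma S_add_one (m : ℕ) : S (m + 1) = S m + iSeq (m + 1) :=
  sum_range_succ iSeq (m + 1)

lemma iSeq_four_mul_block (k : ℕ) :
    iSeq (4 * k + 4) + iSeq (4 * k + 5) + iSeq (4 * k + 6) + iSeq (4 * k + 7) =
      2 * iSeq (k + 1) := by
  rw [show 4 * k + 4 = 4 * (k + 1) by ring, show 4 * k + 5 = 4 * (k + 1) + 1 by ring,
    show 4 * k + 6 = 4 * (k + 1) + 2 by ring, show 4 * k + 7 = 4 * (k + 1) + 3 by ring,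
    iSeq_four_mul, iSeq_four_mul_add_one, iSeq_four_mul_add_two, iSeq_four_mul_add_three]
  ring

lemma S_four_mul_add_three (k : ℕ) : S (4 * k + 3) = 2 * S k := by
  induction k with
  | zero => decide
  | succ k ih =>
    rw [show 4 * (k + 1) + 3 = 4 * k + 7 by ring, S_add_one, S_add_one, S_add_one, S_add_one, ih,
      S_add_one]
    simp only [add_assoc, Nat.reduceAdd]
    linarith [iSeq_four_mul_block k]

lemma S_four_mul_add_two (k : ℕ) : S (4 * k + 2) = 2 * S k - iSeq k := by
  have h := S_add_one (4 * k + 2)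
  rw [S_four_mul_add_three, iSeq_four_mul_add_three] at h
  linarith

lemma S_four_mul_add_one (k : ℕ) : S (4 * k + 1) = 2 * S k - iSeq k + thueMorse k * iSeq k := by
  have h := S_add_one (4 * k + 1)
  rw [S_four_mul_add_two, iSeq_four_mul_add_two] at h
  linarith

lemma S_four_mul (k : ℕ) : S (4 * k) = 2 * S k - iSeq k := by
  have h := S_add_one (4 * k)
  rw [S_four_mul_add_one, iSeq_four_mul_add_one] at h
  linarith

lemma abs_iSeq (n : ℕ) : |iSeq n| = 1 := abs_neg_one_pow _

lemma abs_thueMorse (n : ℕ) : |thueMorse n| = 1 := abs_neg_one_pow _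

lemma abs_S_sub_two_mul_S_div_four_le (n : ℕ) : |S n - 2 * S (n / 4)| ≤ 2 := by
  obtain ⟨k, r, hr, rfl⟩ : ∃ k r, r < 4 ∧ n = 4 * k + r :=
    ⟨n / 4, n % 4, Nat.mod_lt n (by norm_num), (Nat.div_add_mod n 4).symm⟩
  rw [show (4 * k + r) / 4 = k by omega]
  interval_cases r
  · simp [S_four_mul, abs_iSeq]
  · calc |S (4 * k + 1) - 2 * S k| = |-iSeq k + thueMorse k * iSeq k| := by
          rw [S_four_mul_add_one]; ring_nf
      _ ≤ |-iSeq k| + |thueMorse k * iSeq k| := abs_add_le _ _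
      _ = 2 := by rw [abs_neg, abs_mul, abs_iSeq, abs_thueMorse]; norm_num
  · simp [S_four_mul_add_two, abs_iSeq]
  · simp [S_four_mul_add_three]

theorem summatory_div_four_bounds_general (n : ℕ) :
    ((S n : ℚ) - 2) / 2 ≤ (S (n / 4) : ℚ) ∧ (S (n / 4) : ℚ) ≤ ((S n : ℚ) + 2) / 2 := by
  have h : |(S n : ℚ) - 2 * S (n / 4)| ≤ 2 := by
    exact_mod_cast abs_S_sub_two_mul_S_div_four_le n
  obtain ⟨hlower, hupper⟩ := abs_le.mp h
  constructor <;> linarith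

theorem summatory_div_four_bounds (n : ℕ) (hn : 1 ≤ n) :
    ((S n : ℚ) - 2) / 2 ≤ (S (n / 4) : ℚ) ∧ (S (n / 4) : ℚ) ≤ ((S n : ℚ) + 2) / 2 :=
  summatory_div_four_bounds_general n
end

section
/- For every integer k ≥ 1: (1) S(n + 2^{2k}) = -S(n) + 3·2^k for all n with 2^{2k} ≤ n ≤ 2^{2k+1} - 1; (2) S(n + 3·2^{2k}) = S(n) + 2^k for all n with 0 ≤ n ≤ 2^{2k} - 1; (3) S(n + 2^{2k+1}) = -S(n) + 2^{k+2} for all n with 2^{2k+1} ≤ n ≤ 2^{2k+2} - 1; (4) S(n + 3·2^{2k+1}) = S(n) + 2^{k+1} for all n with 0 ≤ n ≤ 2^{2k+1} - 1. -/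
open Finset

lemma lt_of_testBit_of_lt_two_pow {n a M : ℕ} (hn : n < 2 ^ M) (ha : n.testBit a = true) :
    a < M :=
  (Nat.pow_lt_pow_iff_right (by norm_num)).1 ((Nat.ge_two_pow_of_testBit ha).trans_lt hn)

def zerosBelow (n a : ℕ) : ℕ := #{b ∈ range a | n.testBit b = false}

lemma zerosBelow_congr {m n a : ℕ} (h : ∀ b < a, m.testBit b = n.testBit b) :
    zerosBelow m a = zerosBelow n a := by
  unfold zerosBelow
  congr 1
  exact filter_congr fun b hb => by rw [h b (mem_range.1 hb)]

lemma zerosBelow_succ_of_testBit_eq_false {n a : ℕ} (h : n.testBit a = false) :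
    zerosBelow n (a + 1) = zerosBelow n a + 1 := by
  rw [zerosBelow, range_add_one, filter_insert, if_pos h, card_insert_of_notMem (by simp)]
  rfl

lemma zerosBelow_succ_of_testBit_eq_true {n a : ℕ} (h : n.testBit a = true) :
    zerosBelow n (a + 1) = zerosBelow n a := by
  rw [zerosBelow, range_add_one, filter_insert, if_neg (by simp [h])]
  rfl

lemma inv2_eq_sum_zerosBelow {n M : ℕ} (hn : n < 2 ^ M) :
    inv2 n = ∑ a ∈ range M with n.testBit a, zerosBelow n a := by
  rw [inv2, card_eq_sum_card_fiberwise (f := Prod.fst)]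
  · refine sum_congr rfl fun a ha => ?_
    obtain ⟨-, ha⟩ := mem_filter.1 ha
    have haN : a < n + 1 :=
      Nat.lt_succ_of_le (Nat.lt_two_pow_self.le.trans (Nat.ge_two_pow_of_testBit ha))
    refine (congrArg card (ext fun p => ?_)).trans
      (card_map ⟨fun b => (a, b), fun _ _ h => (Prod.mk.inj h).2⟩)
    obtain ⟨a', b⟩ := p
    simp only [mem_filter, mem_product, mem_range, mem_map]
    constructor
    · rintro ⟨⟨⟨-, -⟩, hba, -, hb⟩, rfl⟩
      exact ⟨b, ⟨hba, hb⟩, rfl⟩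
    · rintro ⟨b', ⟨hba, hb⟩, h⟩
      obtain ⟨rfl, rfl⟩ := Prod.mk.inj h
      exact ⟨⟨⟨haN, hba.trans haN⟩, hba, ha, hb⟩, rfl⟩
  · rintro ⟨a, b⟩ hp
    obtain ⟨-, -, ha, -⟩ := mem_filter.1 hp
    exact mem_filter.2 ⟨mem_range.2 (lt_of_testBit_of_lt_two_pow hn ha), ha⟩

lemma inv2_two_pow_add {j n : ℕ} (hn : n < 2 ^ j) :
    inv2 (2 ^ j + n) = inv2 n + zerosBelow n j := by
  have hN : 2 ^ j + n < 2 ^ (j + 1) := by rw [pow_succ]; omega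
  have hlow : ∀ b < j, (2 ^ j + n).testBit b = n.testBit b := fun b hb =>
    Nat.testBit_two_pow_add_gt hb n
  have htop : (2 ^ j + n).testBit j = true := by
    rw [Nat.testBit_two_pow_add_eq, Nat.testBit_lt_two_pow hn, Bool.not_false]
  rw [inv2_eq_sum_zerosBelow hN, inv2_eq_sum_zerosBelow hn, sum_filter, sum_filter,
    sum_range_succ, if_pos htop, zerosBelow_congr hlow]
  congr 1
  refine sum_congr rfl fun a ha => ?_
  have ha := mem_range.1 ha
  rw [hlow a ha, zerosBelow_congr fun b hb => hlow b (hb.trans ha)]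

/-- `iSeq` twisted by the parity of the zero bits below position `j`: by `inv2_two_pow_add`
this is the sign pattern that `iSeq` takes on the block `[2 ^ j, 2 ^ (j + 1))`. -/
def twistedSeq (j n : ℕ) : ℤ := (-1) ^ zerosBelow n j * iSeq n

lemma iSeq_two_pow_add {j n : ℕ} (hn : n < 2 ^ j) : iSeq (2 ^ j + n) = twistedSeq j n := by
  rw [iSeq, inv2_two_pow_add hn, pow_add, mul_comm, twistedSeq, iSeq]

lemma twistedSeq_succ_of_lt {j n : ℕ} (hn : n < 2 ^ j) :
    twistedSeq (j + 1) n = -twistedSeq j n := by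
  rw [twistedSeq, twistedSeq, zerosBelow_succ_of_testBit_eq_false (Nat.testBit_lt_two_pow hn),
    pow_succ]
  ring

lemma twistedSeq_succ_two_pow_add {j n : ℕ} (hn : n < 2 ^ j) :
    twistedSeq (j + 1) (2 ^ j + n) = iSeq n := by
  have htop : (2 ^ j + n).testBit j = true := by
    rw [Nat.testBit_two_pow_add_eq, Nat.testBit_lt_two_pow hn, Bool.not_false]
  rw [twistedSeq, zerosBelow_succ_of_testBit_eq_true htop,
    zerosBelow_congr fun b hb => Nat.testBit_two_pow_add_gt hb n, iSeq_two_pow_add hn,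
    twistedSeq, ← mul_assoc, ← pow_add, Even.neg_one_pow ⟨_, rfl⟩, one_mul]

lemma sum_range_two_pow_add_iSeq {j m : ℕ} (hm : m ≤ 2 ^ j) :
    ∑ r ∈ range (2 ^ j + m), iSeq r =
      ∑ r ∈ range (2 ^ j), iSeq r + ∑ r ∈ range m, twistedSeq j r := by
  rw [sum_range_add]
  congr 1
  exact sum_congr rfl fun r hr => iSeq_two_pow_add ((mem_range.1 hr).trans_le hm)

lemma sum_range_twistedSeq_succ {j m : ℕ} (hm : m ≤ 2 ^ j) :
    ∑ r ∈ range m, twistedSeq (j + 1) r = -∑ r ∈ range m, twistedSeq j r := by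
  rw [← sum_neg_distrib]
  exact sum_congr rfl fun r hr => twistedSeq_succ_of_lt ((mem_range.1 hr).trans_le hm)

lemma sum_range_two_pow_add_twistedSeq_succ {j m : ℕ} (hm : m ≤ 2 ^ j) :
    ∑ r ∈ range (2 ^ j + m), twistedSeq (j + 1) r =
      -∑ r ∈ range (2 ^ j), twistedSeq j r + ∑ r ∈ range m, iSeq r := by
  rw [sum_range_add, sum_range_twistedSeq_succ le_rfl]
  congr 1
  exact sum_congr rfl fun r hr => twistedSeq_succ_two_pow_add ((mem_range.1 hr).trans_le hm)

def blockSum (j : ℕ) : ℤ := ∑ r ∈ range (2 ^ j), iSeq r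

def twistedBlockSum (j : ℕ) : ℤ := ∑ r ∈ range (2 ^ j), twistedSeq j r

lemma blockSum_succ (j : ℕ) : blockSum (j + 1) = blockSum j + twistedBlockSum j := by
  rw [blockSum, pow_succ, mul_two, sum_range_two_pow_add_iSeq le_rfl]
  rfl

lemma twistedBlockSum_succ (j : ℕ) :
    twistedBlockSum (j + 1) = blockSum j - twistedBlockSum j := by
  rw [twistedBlockSum, pow_succ, mul_two, sum_range_two_pow_add_twistedSeq_succ le_rfl,
    blockSum, twistedBlockSum]
  ring

/-- The recursion matrix `!![1, 1; 1, -1]` squares to `2`. -/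
lemma blockSum_add_two (j : ℕ) : blockSum (j + 2) = 2 * blockSum j := by
  rw [blockSum_succ, blockSum_succ, twistedBlockSum_succ]
  ring

lemma twistedBlockSum_add_two (j : ℕ) : twistedBlockSum (j + 2) = 2 * twistedBlockSum j := by
  rw [twistedBlockSum_succ, blockSum_succ, twistedBlockSum_succ]
  ring

lemma blockSum_two_mul (k : ℕ) : blockSum (2 * k) = 2 ^ k := by
  induction k with
  | zero => decide
  | succ k ih => rw [mul_add_one, blockSum_add_two, ih, pow_succ']

lemma twistedBlockSum_two_mul (k : ℕ) : twistedBlockSum (2 * k) = 2 ^ k := by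
  induction k with
  | zero => decide
  | succ k ih => rw [mul_add_one, twistedBlockSum_add_two, ih, pow_succ']

lemma blockSum_two_mul_add_one (k : ℕ) : blockSum (2 * k + 1) = 2 ^ (k + 1) := by
  rw [blockSum_succ, blockSum_two_mul, twistedBlockSum_two_mul, pow_succ']
  ring

lemma twistedBlockSum_two_mul_add_one (k : ℕ) : twistedBlockSum (2 * k + 1) = 0 := by
  rw [twistedBlockSum_succ, blockSum_two_mul, twistedBlockSum_two_mul, sub_self]

lemma S_add_two_pow_add_S {j n : ℕ} (h₁ : 2 ^ j ≤ n) (h₂ : n < 2 ^ (j + 1)) :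
    S (n + 2 ^ j) + S n = blockSum j + blockSum (j + 1) := by
  obtain ⟨m, rfl⟩ := Nat.exists_eq_add_of_le h₁
  have hm : m + 1 ≤ 2 ^ j := by rw [pow_succ] at h₂; omega
  have hS : S (2 ^ j + m) = blockSum j + ∑ r ∈ range (m + 1), twistedSeq j r :=
    sum_range_two_pow_add_iSeq hm
  have hS' :
      S (2 ^ j + m + 2 ^ j) = blockSum (j + 1) - ∑ r ∈ range (m + 1), twistedSeq j r := by
    rw [S, show 2 ^ j + m + 2 ^ j + 1 = 2 ^ (j + 1) + (m + 1) by rw [pow_succ]; omega,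
      sum_range_two_pow_add_iSeq (hm.trans (Nat.pow_le_pow_right two_pos j.le_succ)),
      sum_range_twistedSeq_succ hm, blockSum, sub_eq_add_neg]
  rw [hS, hS']
  ring

lemma S_add_three_mul_two_pow {j n : ℕ} (hn : n < 2 ^ j) :
    S (n + 3 * 2 ^ j) = S n + blockSum (j + 1) - twistedBlockSum j := by
  have hm : 2 ^ j + (n + 1) ≤ 2 ^ (j + 1) := by rw [pow_succ]; omega
  rw [S, show n + 3 * 2 ^ j + 1 = 2 ^ (j + 1) + (2 ^ j + (n + 1)) by rw [pow_succ]; omega,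
    sum_range_two_pow_add_iSeq hm, sum_range_two_pow_add_twistedSeq_succ hn, S, blockSum,
    twistedBlockSum]
  ring

theorem summatory_reflection_identities_general (k : ℕ) :
    (∀ n : ℕ, 2 ^ (2 * k) ≤ n → n ≤ 2 ^ (2 * k + 1) - 1 →
        S (n + 2 ^ (2 * k)) = -S n + 3 * 2 ^ k) ∧
      (∀ n : ℕ, n ≤ 2 ^ (2 * k) - 1 →
        S (n + 3 * 2 ^ (2 * k)) = S n + 2 ^ k) ∧
      (∀ n : ℕ, 2 ^ (2 * k + 1) ≤ n → n ≤ 2 ^ (2 * k + 2) - 1 →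
        S (n + 2 ^ (2 * k + 1)) = -S n + 2 ^ (k + 2)) ∧
      (∀ n : ℕ, n ≤ 2 ^ (2 * k + 1) - 1 →
        S (n + 3 * 2 ^ (2 * k + 1)) = S n + 2 ^ (k + 1)) := by
  refine ⟨fun n h₁ h₂ => ?_, fun n h => ?_, fun n h₁ h₂ => ?_, fun n h => ?_⟩
  · have := S_add_two_pow_add_S h₁ (Nat.lt_of_le_sub_one (Nat.two_pow_pos _) h₂)
    rw [blockSum_two_mul, blockSum_two_mul_add_one] at this
    linear_combination this
  · rw [S_add_three_mul_two_pow (Nat.lt_of_le_sub_one (Nat.two_pow_pos _) h),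
      blockSum_two_mul_add_one, twistedBlockSum_two_mul]
    ring
  · have := S_add_two_pow_add_S h₁ (Nat.lt_of_le_sub_one (Nat.two_pow_pos _) h₂)
    rw [blockSum_two_mul_add_one, show 2 * k + 1 + 1 = 2 * (k + 1) by ring, blockSum_two_mul]
      at this
    linear_combination this
  · rw [S_add_three_mul_two_pow (Nat.lt_of_le_sub_one (Nat.two_pow_pos _) h),
      show 2 * k + 1 + 1 = 2 * (k + 1) by ring, blockSum_two_mul, twistedBlockSum_two_mul_add_one,
      sub_zero]

theorem summatory_reflection_identities (k : ℕ) (hk : 1 ≤ k) :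
    (∀ n : ℕ, 2 ^ (2 * k) ≤ n → n ≤ 2 ^ (2 * k + 1) - 1 →
        S (n + 2 ^ (2 * k)) = -S n + 3 * 2 ^ k) ∧
      (∀ n : ℕ, n ≤ 2 ^ (2 * k) - 1 →
        S (n + 3 * 2 ^ (2 * k)) = S n + 2 ^ k) ∧
      (∀ n : ℕ, 2 ^ (2 * k + 1) ≤ n → n ≤ 2 ^ (2 * k + 2) - 1 →
        S (n + 2 ^ (2 * k + 1)) = -S n + 2 ^ (k + 2)) ∧
      (∀ n : ℕ, n ≤ 2 ^ (2 * k + 1) - 1 →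
        S (n + 3 * 2 ^ (2 * k + 1)) = S n + 2 ^ (k + 1)) :=
  summatory_reflection_identities_general k
end
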